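/- Any atomic SL(2,ℤ)-invariant ergodic Borel probability measure on the torus (ℝ/ℤ)² is the uniform measure on the finite set of pairs (x, y) ∈ (ℤ[1/r]/ℤ)² such that x and y generate ℤ[1/r]/ℤ, for some r ≥ 1; in particular every point in its support has both coordinates rational. -/

import Mathlib

open MeasureTheory

/-- The 2-torus `(ℝ/ℤ)²`. -/
abbrev Torus2 := AddCircle (1 : ℝ) × AddCircle (1 : ℝ)

/-- The linear action of `SL(2, ℤ)` on the torus `(ℝ/ℤ)²`. -/
noncomputable def sl2Act (A : Matrix.SpecialLinearGroup (Fin 2) ℤ) (v : Torus2) :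
    Torus2 :=
  (A.1 0 0 • v.1 + A.1 0 1 • v.2, A.1 1 0 • v.1 + A.1 1 1 • v.2)

/-- The subgroup `ℤ[1/r]/ℤ = {z ∈ ℝ/ℤ : r • z = 0}` of `ℝ/ℤ`. -/
noncomputable def torsSub (r : ℕ) : AddSubgroup (AddCircle (1 : ℝ)) where
  carrier := {z | (r : ℤ) • z = 0}
  zero_mem' := smul_zero _
  add_mem' := by
    intro a b ha hb
    simp only [Set.mem_setOf_eq, smul_add] at *
    rw [ha, hb, add_zero]
  neg_mem' := by
    intro a ha
    simp only [Set.mem_setOf_eq, smul_neg] at *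
    rw [ha, neg_zero]

/-- The set of pairs `(x, y) ∈ (ℤ[1/r]/ℤ)²` such that `x` and `y` generate
`ℤ[1/r]/ℤ`. -/
noncomputable def genSet (r : ℕ) : Set Torus2 :=
  {v | AddSubgroup.closure {v.1, v.2} = torsSub r}

/-!
Shearing by `T ^ n` moves an atom `v` through the points `(v.1 + n • v.2, v.2)`, all of the same
mass, so finiteness of `μ` forces `v.2` (and, after applying `S`, `v.1`) to be torsion. The
coordinates of a torsion point then generate a finite subgroup of `ℝ/ℤ`, which is `ℤ[1/r]/ℤ` for
`r` its order, so `v ∈ genSet r`. This set is invariant, hence of full measure by ergodicity, and it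
is a single orbit: its points are the images `(b / r, d / r)` of the coprime pairs `(b, d)` of
`ZMod r`, a coprime pair mod `r` lifts to a coprime pair of integers, and that pair is the first
column of some `A ∈ SL(2, ℤ)` sending `(1 / r, 0)` to `(b / r, d / r)`. So all points of
`genSet r` carry the same mass, namely `1 / #(genSet r)`.
-/

section Measure

variable {α : Type*} [MeasurableSpace α] [MeasurableSingletonClass α] {μ : Measure α}

lemma eq_zero_of_injective_of_forall_measure_singleton_eq [IsFiniteMeasure μ] {ι : Type*}
    [Infinite ι] [Countable ι] {f : ι → α} (hf : Function.Injective f) {c : ENNReal}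
    (hc : ∀ i, μ {f i} = c) : c = 0 := by
  by_contra h
  have hdisj : Pairwise (Function.onFun Disjoint fun i => ({f i} : Set α)) :=
    fun i j hij => Set.disjoint_singleton.2 (hf.ne hij)
  have := measure_iUnion (μ := μ) hdisj fun i => measurableSet_singleton (f i)
  simp only [hc, ENNReal.tsum_const_eq_top_of_ne_zero h] at this
  exact measure_ne_top μ _ this

lemma eq_inv_ncard_of_forall_measure_singleton_eq {s : Set α} (hs : s.Finite) (hμs : μ s = 1)
    {c : ENNReal} (hc : ∀ x ∈ s, μ {x} = c) : c = (s.ncard : ENNReal)⁻¹ := by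
  obtain ⟨t, rfl⟩ := hs.exists_finset_coe
  refine ENNReal.eq_inv_of_mul_eq_one_left ?_
  rw [Set.ncard_coe_finset, ← hμs, ← sum_measure_singleton, Finset.sum_congr rfl hc,
    Finset.sum_const, nsmul_eq_mul, mul_comm]

end Measure

lemma Int.exists_isCoprime_add_mul {b d n : ℤ} (hb : b ≠ 0)
    (h : ∀ p : ℤ, Prime p → p ∣ b → p ∣ d → ¬p ∣ n) : ∃ k, IsCoprime b (d + k * n) := by
  classical
  -- each prime factor of `b` divides exactly one of `d` and `k`, and not `n` if it divides `d`
  let k : ℤ := ∏ q ∈ b.natAbs.primeFactors.filter fun q : ℕ => ¬(q : ℤ) ∣ d, (q : ℤ)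
  refine ⟨k, isCoprime_of_prime_dvd (fun h0 => hb h0.1) fun p hp hpb hpd' => ?_⟩
  by_cases hpd : p ∣ d
  · rcases hp.dvd_or_dvd ((dvd_add_right hpd).1 hpd') with hpk | hpn
    · obtain ⟨q, hq, hpq⟩ := (hp.dvd_finsetProd_iff _).1 hpk
      rw [Finset.mem_filter] at hq
      have hq' : Prime (q : ℤ) := Nat.prime_iff_prime_int.1 (Nat.prime_of_mem_primeFactors hq.1)
      exact hq.2 ((hp.associated_of_dvd hq' hpq).symm.dvd.trans hpd)
    · exact h p hp hpb hpd hpn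
  · have hmem : p.natAbs ∈ b.natAbs.primeFactors.filter fun q : ℕ => ¬(q : ℤ) ∣ d := by
      rw [Finset.mem_filter, Nat.mem_primeFactors, Int.natAbs_dvd]
      exact ⟨⟨Int.prime_iff_natAbs_prime.1 hp, Int.natAbs_dvd_natAbs.2 hpb,
        Int.natAbs_ne_zero.2 hb⟩, hpd⟩
    have hpk : p ∣ k := Int.natAbs_dvd.1 (Finset.dvd_prod_of_mem _ hmem)
    exact hpd ((dvd_add_left (hpk.mul_right n)).1 hpd')

lemma ZMod.exists_isCoprime_intCast_eq {r : ℕ} [NeZero r] {b d : ZMod r} (h : IsCoprime b d) :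
    ∃ b' d' : ℤ, IsCoprime b' d' ∧ (b' : ZMod r) = b ∧ (d' : ZMod r) = d := by
  obtain ⟨b₁, hb₁, rfl⟩ : ∃ b₁ : ℤ, b₁ ≠ 0 ∧ (b₁ : ZMod r) = b := by
    obtain ⟨b₀, rfl⟩ := ZMod.intCast_surjective b
    rcases eq_or_ne b₀ 0 with rfl | hb₀
    · exact ⟨r, by exact_mod_cast NeZero.ne r, by simp⟩
    · exact ⟨b₀, hb₀, rfl⟩
  obtain ⟨d₀, rfl⟩ := ZMod.intCast_surjective d
  obtain ⟨x, y, hxy⟩ := h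
  obtain ⟨x₀, rfl⟩ := ZMod.intCast_surjective x
  obtain ⟨y₀, rfl⟩ := ZMod.intCast_surjective y
  have hr : (r : ℤ) ∣ x₀ * b₁ + y₀ * d₀ - 1 :=
    (ZMod.intCast_zmod_eq_zero_iff_dvd _ r).1 (by push_cast; rw [hxy, sub_self])
  obtain ⟨k, hk⟩ := Int.exists_isCoprime_add_mul (n := r) (d := d₀) hb₁ fun p hp hpb hpd hpr => by
    refine hp.not_isUnit (isUnit_of_dvd_one ?_)
    have := dvd_sub ((hpb.mul_left x₀).add (hpd.mul_left y₀)) (hpr.trans hr)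
    rwa [sub_sub_cancel] at this
  exact ⟨b₁, d₀ + k * r, hk, rfl, by simp⟩

lemma Matrix.SpecialLinearGroup.exists_col_zero_eq {R : Type*} [CommRing R] {a c : R}
    (h : IsCoprime a c) :
    ∃ A : Matrix.SpecialLinearGroup (Fin 2) R, A.1 0 0 = a ∧ A.1 1 0 = c := by
  obtain ⟨x, y, hxy⟩ := h
  exact ⟨⟨!![a, -y; c, x], by rw [Matrix.det_fin_two_of]; linear_combination hxy⟩, rfl, rfl⟩

lemma mem_torsSub {r : ℕ} {z : AddCircle (1 : ℝ)} : z ∈ torsSub r ↔ r • z = 0 := by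
  rw [← natCast_zsmul]
  rfl

lemma torsSub_eq_range_toAddCircle (r : ℕ) [NeZero r] :
    torsSub r = (ZMod.toAddCircle : ZMod r →+ UnitAddCircle).range := by
  ext z
  rw [mem_torsSub, AddMonoidHom.mem_range]
  constructor
  · intro hz
    obtain ⟨m, -, hm⟩ := (AddCircle.nsmul_eq_zero_iff (NeZero.pos r)).1 hz
    exact ⟨m, by rw [ZMod.toAddCircle_natCast, ← hm, mul_one]⟩
  · rintro ⟨j, rfl⟩
    rw [← map_nsmul, nsmul_eq_mul, ZMod.natCast_self, zero_mul, map_zero]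

lemma natCard_torsSub (r : ℕ) [NeZero r] : Nat.card (torsSub r) = r := by
  rw [torsSub_eq_range_toAddCircle,
    ← Nat.card_congr (AddMonoidHom.ofInjective (ZMod.toAddCircle_injective r)).toEquiv,
    Nat.card_zmod]

lemma finite_torsSub (r : ℕ) [NeZero r] : Finite (torsSub r) :=
  Nat.finite_of_card_ne_zero (by rw [natCard_torsSub]; exact NeZero.ne r)

lemma AddSubgroup.eq_torsSub_natCard (H : AddSubgroup (AddCircle (1 : ℝ))) [Finite H] :
    H = torsSub (Nat.card H) := by
  have : NeZero (Nat.card H) := ⟨Nat.card_pos.ne'⟩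
  have := finite_torsSub (Nat.card H)
  refine AddSubgroup.eq_of_le_of_card_ge (fun z hz => ?_) (natCard_torsSub _).le
  rw [mem_torsSub]
  exact congrArg Subtype.val (card_nsmul_eq_zero' (G := H) (x := ⟨z, hz⟩))

lemma exists_mem_genSet_of_isOfFinAddOrder {v : Torus2} (h₁ : IsOfFinAddOrder v.1)
    (h₂ : IsOfFinAddOrder v.2) : ∃ r, 1 ≤ r ∧ v ∈ genSet r := by
  set n := addOrderOf v.1 * addOrderOf v.2
  have : NeZero n := ⟨(Nat.mul_pos h₁.addOrderOf_pos h₂.addOrderOf_pos).ne'⟩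
  have hle : AddSubgroup.closure {v.1, v.2} ≤ torsSub n := by
    rw [AddSubgroup.closure_le]
    rintro z (rfl | rfl) <;> rw [SetLike.mem_coe, mem_torsSub, ← addOrderOf_dvd_iff_nsmul_eq_zero]
    exacts [dvd_mul_right _ _, dvd_mul_left _ _]
  have := finite_torsSub n
  have := Finite.of_injective _ (AddSubgroup.inclusion_injective hle)
  exact ⟨_, Nat.card_pos, AddSubgroup.eq_torsSub_natCard _⟩

lemma finite_genSet (r : ℕ) [NeZero r] : (genSet r).Finite := by
  have := finite_torsSub r
  refine ((torsSub r : Set (AddCircle (1 : ℝ))).toFinite.prod (torsSub r : Set _).toFinite).subset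
    fun v hv => ?_
  rw [genSet, Set.mem_ofPred_eq] at hv
  exact ⟨hv ▸ AddSubgroup.subset_closure (Set.mem_insert _ _),
    hv ▸ AddSubgroup.subset_closure (Set.mem_insert_of_mem _ rfl)⟩

section Action

open Matrix.SpecialLinearGroup

variable (A B : Matrix.SpecialLinearGroup (Fin 2) ℤ)

lemma sl2Act_one (v : Torus2) : sl2Act 1 v = v := by
  simp [sl2Act]

lemma sl2Act_mul (v : Torus2) : sl2Act (A * B) v = sl2Act A (sl2Act B v) := by
  simp only [sl2Act, coe_mul, Matrix.mul_apply, Fin.sum_univ_two, add_smul, mul_smul, smul_add]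
  exact Prod.ext (add_add_add_comm ..) (add_add_add_comm ..)

lemma sl2Act_inv_sl2Act (v : Torus2) : sl2Act A⁻¹ (sl2Act A v) = v := by
  rw [← sl2Act_mul, inv_mul_cancel, sl2Act_one]

lemma sl2Act_injective : Function.Injective (sl2Act A) :=
  Function.LeftInverse.injective (sl2Act_inv_sl2Act A)

lemma closure_sl2Act_le (v : Torus2) :
    AddSubgroup.closure {(sl2Act A v).1, (sl2Act A v).2} ≤ AddSubgroup.closure {v.1, v.2} := by
  rw [AddSubgroup.closure_le]
  rintro z (rfl | rfl)
  exacts [AddSubgroup.mem_closure_pair.2 ⟨_, _, rfl⟩, AddSubgroup.mem_closure_pair.2 ⟨_, _, rfl⟩]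

lemma closure_sl2Act (v : Torus2) :
    AddSubgroup.closure {(sl2Act A v).1, (sl2Act A v).2} = AddSubgroup.closure {v.1, v.2} := by
  refine (closure_sl2Act_le A v).antisymm ?_
  simpa only [sl2Act_inv_sl2Act] using closure_sl2Act_le A⁻¹ (sl2Act A v)

lemma preimage_sl2Act_genSet (r : ℕ) : sl2Act A ⁻¹' genSet r = genSet r := by
  ext v
  simp only [Set.mem_preimage, genSet, Set.mem_ofPred_eq, closure_sl2Act]

lemma sl2Act_toAddCircle_one_zero (r : ℕ) [NeZero r] :
    sl2Act A (ZMod.toAddCircle (1 : ZMod r), 0) =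
      (ZMod.toAddCircle (A.1 0 0 : ZMod r), ZMod.toAddCircle (A.1 1 0 : ZMod r)) := by
  simp [sl2Act, ← map_zsmul]

lemma exists_sl2Act_toAddCircle_eq_of_mem_genSet {r : ℕ} [NeZero r] {v : Torus2}
    (hv : v ∈ genSet r) :
    ∃ A : Matrix.SpecialLinearGroup (Fin 2) ℤ,
      sl2Act A (ZMod.toAddCircle (1 : ZMod r), 0) = v := by
  set e : ZMod r →+ UnitAddCircle := ZMod.toAddCircle
  have hv' : AddSubgroup.closure {v.1, v.2} = e.range := by
    rw [← torsSub_eq_range_toAddCircle]; exact hv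
  have hmem : ∀ z ∈ ({v.1, v.2} : Set _), z ∈ e.range := fun z hz => by
    rw [← hv']; exact AddSubgroup.subset_closure hz
  obtain ⟨b, hb⟩ := hmem v.1 (Set.mem_insert _ _)
  obtain ⟨d, hd⟩ := hmem v.2 (Set.mem_insert_of_mem _ rfl)
  have hbd : IsCoprime b d := by
    have h₁ : e 1 ∈ AddSubgroup.closure {v.1, v.2} := by rw [hv']; exact ⟨1, rfl⟩
    obtain ⟨x, y, hxy⟩ := AddSubgroup.mem_closure_pair.1 h₁
    refine ⟨x, y, ZMod.toAddCircle_injective r ?_⟩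
    rw [← hxy, ← hb, ← hd, map_add, ← zsmul_eq_mul, ← zsmul_eq_mul, map_zsmul, map_zsmul]
  obtain ⟨b', d', hb'd', rfl, rfl⟩ := ZMod.exists_isCoprime_intCast_eq hbd
  obtain ⟨A, hA₀, hA₁⟩ := exists_col_zero_eq hb'd'
  exact ⟨A, by rw [sl2Act_toAddCircle_one_zero, hA₀, hA₁, hb, hd]⟩

end Action

section InvariantMeasure

variable {μ : Measure Torus2}

lemma measure_singleton_sl2Act {A : Matrix.SpecialLinearGroup (Fin 2) ℤ}
    (hA : MeasurePreserving (sl2Act A) μ μ) (v : Torus2) : μ {sl2Act A v} = μ {v} := by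
  rw [← hA.measure_preimage (measurableSet_singleton _).nullMeasurableSet, ← Set.image_singleton,
    (sl2Act_injective A).preimage_image]

lemma isOfFinAddOrder_snd_of_measure_singleton_ne_zero [IsFiniteMeasure μ]
    (hinv : ∀ A, MeasurePreserving (sl2Act A) μ μ) {v : Torus2} (hv : μ {v} ≠ 0) :
    IsOfFinAddOrder v.2 := by
  by_contra hv₂
  have hinj : Function.Injective fun n : ℤ => sl2Act (ModularGroup.T ^ n) v := by
    intro m n hmn
    simp only [sl2Act, ModularGroup.coe_T_zpow, Prod.mk.injEq] at hmn
    exact injective_zsmul_iff_not_isOfFinAddOrder.2 hv₂ (by simpa using hmn.1)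
  exact hv (eq_zero_of_injective_of_forall_measure_singleton_eq hinj
    fun n => measure_singleton_sl2Act (hinv _) v)

lemma isOfFinAddOrder_of_measure_singleton_ne_zero [IsFiniteMeasure μ]
    (hinv : ∀ A, MeasurePreserving (sl2Act A) μ μ) {v : Torus2} (hv : μ {v} ≠ 0) :
    IsOfFinAddOrder v.1 ∧ IsOfFinAddOrder v.2 := by
  have hS : (sl2Act ModularGroup.S v).2 = v.1 := by simp [sl2Act]
  refine ⟨hS ▸ isOfFinAddOrder_snd_of_measure_singleton_ne_zero hinv ?_,
    isOfFinAddOrder_snd_of_measure_singleton_ne_zero hinv hv⟩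
  rwa [measure_singleton_sl2Act (hinv _)]

end InvariantMeasure

/-- Any atomic `SL(2, ℤ)`-invariant ergodic Borel probability
measure on `(ℝ/ℤ)²` is, for some `r ≥ 1`, the uniform measure on the (finite)
set of pairs `(x, y) ∈ (ℤ[1/r]/ℤ)²` generating `ℤ[1/r]/ℤ`; in particular every
point of positive measure has both coordinates rational (torsion). -/
theorem atomic_ergodic_classification (μ : Measure Torus2) [IsProbabilityMeasure μ]
    (hinv : ∀ A : Matrix.SpecialLinearGroup (Fin 2) ℤ,
      MeasurePreserving (sl2Act A) μ μ)
    (herg : ∀ s : Set Torus2, MeasurableSet s →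
      (∀ A : Matrix.SpecialLinearGroup (Fin 2) ℤ, sl2Act A ⁻¹' s = s) →
      μ s = 0 ∨ μ s = 1)
    (hatom : ∃ v : Torus2, μ {v} ≠ 0) :
    ∃ r : ℕ, 1 ≤ r ∧ (genSet r).Finite ∧ μ (genSet r) = 1 ∧
      (∀ v ∈ genSet r, μ {v} = ((genSet r).ncard : ENNReal)⁻¹) ∧
      ∀ v : Torus2, μ {v} ≠ 0 → IsOfFinAddOrder v.1 ∧ IsOfFinAddOrder v.2 := by
  obtain ⟨v, hv⟩ := hatom
  have htors := fun w (hw : μ {w} ≠ 0) => isOfFinAddOrder_of_measure_singleton_ne_zero hinv hw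
  obtain ⟨r, hr, hvr⟩ := exists_mem_genSet_of_isOfFinAddOrder (htors v hv).1 (htors v hv).2
  have : NeZero r := ⟨by omega⟩
  have hfin := finite_genSet r
  have hμ : μ (genSet r) = 1 :=
    (herg _ hfin.measurableSet (preimage_sl2Act_genSet · r)).resolve_left
      fun h0 => hv (measure_mono_null (Set.singleton_subset_iff.2 hvr) h0)
  have hconst : ∀ w ∈ genSet r, μ {w} = μ {(ZMod.toAddCircle (1 : ZMod r), 0)} := by
    intro w hw
    obtain ⟨A, rfl⟩ := exists_sl2Act_toAddCircle_eq_of_mem_genSet hw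
    exact measure_singleton_sl2Act (hinv A) _
  exact ⟨r, hr, hfin, hμ, fun w hw => (hconst w hw).trans
    (eq_inv_ncard_of_forall_measure_singleton_eq hfin hμ hconst), htors⟩
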